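/- arXiv:1203.3291 — 2 statements merged into one kernel-verified Lean document; each statement's English description precedes it below -/
import Mathlib

section
/- If W : [0,∞)×[0,∞) → ℝ is C¹ in r and satisfies |W(u,s)| ≤ x(1+u+s)^{-2} and |∂_r W(u,s)| ≤ x(1+u+s)^{-3} for all s ≥ 0, then |W(u,r) − W̄(u,r)| ≤ x r / (2(1+u)(1+u+r)²), where W̄(u,r) = (1/r)∫₀^r W(u,s) ds. -/
/-! Let `g t = -x / (2(1+u+t)²)`. Its derivative `x/(1+u+t)³` dominates `|∂ₛW|`, so `g ± W u`
is monotone and `|W(u,r) - W(u,s)| ≤ g r - g s` for `s ≤ r`. Averaging over `s ∈ [0,r]` bounds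
`|W - W̄|` by `g r` minus the average of `g` over `[0,r]`, which
`∫₀^r (1+u+s)⁻² ds = r / ((1+u)(1+u+r))` evaluates to the claimed bound. -/

open MeasureTheory intervalIntegral

/-- The radial average `W̄(u,r) = (1/r)∫₀^r W(u,s) ds`, extended by `W̄(u,0) = W(u,0)`. -/
noncomputable def radAvg (W : ℝ → ℝ → ℝ) (u r : ℝ) : ℝ :=
  if r = 0 then W u 0 else (1 / r) * ∫ s in (0:ℝ)..r, W u s

open Set

lemma abs_sub_le_sub_of_abs_deriv_le {f f' g g' : ℝ → ℝ} {s t : ℝ} (hst : s ≤ t)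
    (hf : ∀ y ∈ Icc s t, HasDerivAt f (f' y) y) (hg : ∀ y ∈ Icc s t, HasDerivAt g (g' y) y)
    (hle : ∀ y ∈ Icc s t, |f' y| ≤ g' y) :
    |f t - f s| ≤ g t - g s := by
  have hmono : ∀ {φ φ' : ℝ → ℝ}, (∀ y ∈ Icc s t, HasDerivAt φ (φ' y) y) →
      (∀ y ∈ Icc s t, 0 ≤ φ' y) → φ s ≤ φ t := fun hφ hφ₀ =>
    monotoneOn_of_hasDerivWithinAt_nonneg (convex_Icc s t)
      (fun y hy => (hφ y hy).continuousAt.continuousWithinAt)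
      (fun y hy => (hφ y (interior_subset hy)).hasDerivWithinAt)
      (fun y hy => hφ₀ y (interior_subset hy))
      (left_mem_Icc.2 hst) (right_mem_Icc.2 hst) hst
  have hsub : g s - f s ≤ g t - f t := hmono (fun y hy => (hg y hy).sub (hf y hy))
    (fun y hy => sub_nonneg.2 ((le_abs_self _).trans (hle y hy)))
  have hadd : g s + f s ≤ g t + f t := hmono (fun y hy => (hg y hy).add (hf y hy))
    (fun y hy => by linarith [neg_abs_le (f' y), hle y hy])
  rw [abs_le]
  constructor <;> linarith

lemma sub_mul_integral_eq_mul_integral_sub {f : ℝ → ℝ} {r : ℝ} (hr : r ≠ 0)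
    (hf : IntervalIntegrable f volume 0 r) :
    f r - r⁻¹ * ∫ s in (0:ℝ)..r, f s = r⁻¹ * ∫ s in (0:ℝ)..r, (f r - f s) := by
  rw [integral_sub intervalIntegrable_const hf, intervalIntegral.integral_const, smul_eq_mul,
    sub_zero, mul_sub, inv_mul_cancel_left₀ hr]

lemma abs_sub_average_le_of_abs_sub_le {f g : ℝ → ℝ} {r : ℝ} (hr : 0 < r)
    (hf : IntervalIntegrable f volume 0 r) (hg : IntervalIntegrable g volume 0 r)
    (h : ∀ s ∈ Icc 0 r, |f r - f s| ≤ g r - g s) :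
    |f r - r⁻¹ * ∫ s in (0:ℝ)..r, f s| ≤ g r - r⁻¹ * ∫ s in (0:ℝ)..r, g s := by
  rw [sub_mul_integral_eq_mul_integral_sub hr.ne' hf,
    sub_mul_integral_eq_mul_integral_sub hr.ne' hg, abs_mul, abs_of_pos (inv_pos.2 hr)]
  gcongr
  calc |∫ s in (0:ℝ)..r, (f r - f s)| ≤ ∫ s in (0:ℝ)..r, |f r - f s| :=
        abs_integral_le_integral_abs hr.le
    _ ≤ ∫ s in (0:ℝ)..r, (g r - g s) :=
        integral_mono_on hr.le (intervalIntegrable_const.sub hf).abs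
          (intervalIntegrable_const.sub hg) h

lemma integral_inv_add_sq {c r : ℝ} (hc : 0 < c) (hr : 0 ≤ r) :
    ∫ s in (0:ℝ)..r, ((c + s) ^ 2)⁻¹ = c⁻¹ - (c + r)⁻¹ := by
  have hpos : ∀ s ∈ uIcc 0 r, 0 < c + s := fun s hs => by
    rw [uIcc_of_le hr] at hs; linarith [hs.1]
  rw [integral_eq_sub_of_hasDerivAt (f := fun s => -(c + s)⁻¹)]
  · simp only [add_zero]; ring
  · intro s hs
    have h := (((hasDerivAt_id' s).const_add c).inv (hpos s hs).ne').neg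
    rwa [neg_div, neg_neg, one_div] at h
  · exact (ContinuousOn.inv₀ (by fun_prop) fun s hs => by
      positivity [hpos s hs]).intervalIntegrable

theorem stmt1_general (W W' : ℝ → ℝ → ℝ)
    (hderiv : ∀ u s : ℝ, HasDerivAt (W u) (W' u s) s)
    (u r x : ℝ) (hu : 0 ≤ u) (hr : 0 ≤ r)
    (hbound' : ∀ s, 0 ≤ s → |W' u s| ≤ x / (1 + u + s) ^ 3) :
    |W u r - radAvg W u r| ≤ x * r / (2 * (1 + u) * (1 + u + r) ^ 2) := by
  rcases hr.eq_or_lt with rfl | hr₀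
  · simp [radAvg]
  have hpos : ∀ t, 0 ≤ t → 0 < 1 + u + t := fun t ht => by linarith
  set g : ℝ → ℝ := fun t => -(x / 2) * ((1 + u + t) ^ 2)⁻¹
  have hg : ∀ t, 0 ≤ t → HasDerivAt g (x / (1 + u + t) ^ 3) t := fun t ht => by
    refine ((((hasDerivAt_id' t).const_add (1 + u)).pow 2).inv
      (pow_pos (hpos t ht) 2).ne').const_mul (-(x / 2)) |>.congr_deriv ?_
    have := hpos t ht
    simp only [Pi.pow_apply]
    field_simp
    ring
  have hWcont : Continuous (W u) :=
    continuous_iff_continuousAt.2 fun s => (hderiv u s).continuousAt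
  have hgcont : ContinuousOn g (Icc 0 r) :=
    fun t ht => (hg t ht.1).continuousAt.continuousWithinAt
  have hincr : ∀ s ∈ Icc 0 r, |W u r - W u s| ≤ g r - g s := fun s hs =>
    abs_sub_le_sub_of_abs_deriv_le hs.2 (fun t _ => hderiv u t)
      (fun t ht => hg t (hs.1.trans ht.1)) (fun t ht => hbound' t (hs.1.trans ht.1))
  have havg := abs_sub_average_le_of_abs_sub_le hr₀ (hWcont.intervalIntegrable 0 r)
    (hgcont.intervalIntegrable_of_Icc hr) hincr
  rw [radAvg, if_neg hr₀.ne', one_div]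
  refine havg.trans_eq ?_
  simp only [g]
  rw [intervalIntegral.integral_const_mul, integral_inv_add_sq (by linarith) hr]
  have := hpos r hr
  field_simp
  ring

theorem stmt1 (W W' : ℝ → ℝ → ℝ)
    (hderiv : ∀ u s : ℝ, HasDerivAt (W u) (W' u s) s)
    (hW'cont : ∀ u : ℝ, Continuous (W' u))
    (u r x : ℝ) (hu : 0 ≤ u) (hr : 0 ≤ r) (hx : 0 ≤ x)
    (hbound : ∀ s, 0 ≤ s → |W u s| ≤ x / (1 + u + s) ^ 2)
    (hbound' : ∀ s, 0 ≤ s → |W' u s| ≤ x / (1 + u + s) ^ 3) :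
    |W u r - radAvg W u r| ≤ x * r / (2 * (1 + u) * (1 + u + r) ^ 2) :=
  stmt1_general W W' hderiv u r x hu hr hbound'
end

section
/- If W₁, W₂ are continuous with |W_j(u,s)| ≤ x(1+u+s)^{-2}, |W̄_j(u,s)| ≤ x((1+u)(1+u+s))^{-1}, and |W₁ − W₂|, |W̄₁ − W̄₂| ≤ y(1+u+s)^{-2}, then the corresponding local charges Q_j(u,r) = ∫₀^r s (h̄_j k_j − k̄_j h_j) ds satisfy |Q₁(u,r) − Q₂(u,r)| ≤ x y r² / ((1+u)²(1+u+r)²). -/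
/-!
With `A = h̄ k − k̄ h`, the splitting
`A₁ − A₂ = (h̄₁(k₁ − k₂) − k̄₁(h₁ − h₂)) + ((h̄₁ − h̄₂)k₂ − (k̄₁ − k̄₂)h₂)`
bounds `|A₁ − A₂|` by `|W̄₁||W₁ − W₂| + |W̄₁ − W̄₂||W₂| ≤ 2xy / (a(a + s)³)`, where `a = 1 + u`
and `(a + s)⁻² ≤ (a(a + s))⁻¹` is used on the second term. What remains is the explicit integral
`∫₀^r s (a + s)⁻³ ds = r² / (2a(a + r)²)`.
-/

open intervalIntegral

lemma abs_mul_sub_mul_le (a b c d : ℝ) : |a * d - b * c| ≤ (|a| + |b|) * (|c| + |d|) := by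
  refine (abs_sub _ _).trans ?_
  rw [abs_mul, abs_mul]
  nlinarith [abs_nonneg a, abs_nonneg b, abs_nonneg c, abs_nonneg d]

lemma abs_cross_sub_cross_le (p₁ q₁ h₁ k₁ p₂ q₂ h₂ k₂ : ℝ) :
    |(p₁ * k₁ - q₁ * h₁) - (p₂ * k₂ - q₂ * h₂)| ≤
      (|p₁| + |q₁|) * (|h₁ - h₂| + |k₁ - k₂|) + (|p₁ - p₂| + |q₁ - q₂|) * (|h₂| + |k₂|) := by
  have hsplit : (p₁ * k₁ - q₁ * h₁) - (p₂ * k₂ - q₂ * h₂) =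
      (p₁ * (k₁ - k₂) - q₁ * (h₁ - h₂)) + ((p₁ - p₂) * k₂ - (q₁ - q₂) * h₂) := by ring
  rw [hsplit]
  exact (abs_add_le _ _).trans
    (add_le_add (abs_mul_sub_mul_le _ _ _ _) (abs_mul_sub_mul_le _ _ _ _))

lemma abs_mul_cross_sub_mul_cross_le {a s x y p₁ q₁ h₁ k₁ p₂ q₂ h₂ k₂ : ℝ}
    (ha : 0 < a) (hs : 0 ≤ s) (hx : 0 ≤ x) (hy : 0 ≤ y)
    (hpq₁ : |p₁| + |q₁| ≤ x / (a * (a + s)))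
    (hhk₂ : |h₂| + |k₂| ≤ x / (a + s) ^ 2)
    (hhk : |h₁ - h₂| + |k₁ - k₂| ≤ y / (a + s) ^ 2)
    (hpq : |p₁ - p₂| + |q₁ - q₂| ≤ y / (a + s) ^ 2) :
    |s * (p₁ * k₁ - q₁ * h₁) - s * (p₂ * k₂ - q₂ * h₂)| ≤ 2 * x * y / a * (s / (a + s) ^ 3) := by
  have has : 0 < a + s := by linarith
  have hhk₂' : |h₂| + |k₂| ≤ x / (a * (a + s)) :=
    hhk₂.trans (div_le_div_of_nonneg_left hx (by positivity) (by nlinarith))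
  calc |s * (p₁ * k₁ - q₁ * h₁) - s * (p₂ * k₂ - q₂ * h₂)|
      = s * |(p₁ * k₁ - q₁ * h₁) - (p₂ * k₂ - q₂ * h₂)| := by
        rw [← mul_sub, abs_mul, abs_of_nonneg hs]
    _ ≤ s * (x / (a * (a + s)) * (y / (a + s) ^ 2) + y / (a + s) ^ 2 * (x / (a * (a + s)))) := by
        gcongr
        exact (abs_cross_sub_cross_le _ _ _ _ _ _ _ _).trans <| add_le_add
          (mul_le_mul hpq₁ hhk (by positivity) (by positivity))
          (mul_le_mul hpq hhk₂' (by positivity) (by positivity))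
    _ = 2 * x * y / a * (s / (a + s) ^ 3) := by
        field_simp
        ring

lemma continuous_mul_cross {h k p q : ℝ → ℝ} (hh : Continuous h) (hk : Continuous k)
    (hp : Continuous p) (hq : Continuous q) :
    Continuous fun s => s * (p s * k s - q s * h s) := by
  fun_prop

lemma continuousOn_div_add_pow_three {a : ℝ} (ha : 0 < a) :
    ContinuousOn (fun s : ℝ => s / (a + s) ^ 3) (Set.Ici 0) :=
  continuousOn_id.div (by fun_prop) fun s (hs : 0 ≤ s) => by positivity

lemma intervalIntegrable_div_add_pow_three {a r : ℝ} (ha : 0 < a) (hr : 0 ≤ r) :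
    IntervalIntegrable (fun s : ℝ => s / (a + s) ^ 3) MeasureTheory.volume 0 r := by
  refine ((continuousOn_div_add_pow_three ha).mono ?_).intervalIntegrable
  rw [Set.uIcc_of_le hr]
  exact Set.Icc_subset_Ici_self

lemma integral_div_add_pow_three {a r : ℝ} (ha : 0 < a) (hr : 0 ≤ r) :
    ∫ s in (0 : ℝ)..r, s / (a + s) ^ 3 = r ^ 2 / (2 * a * (a + r) ^ 2) := by
  have hderiv : ∀ s ∈ Set.uIcc (0 : ℝ) r,
      HasDerivAt (fun s : ℝ => -(a + s)⁻¹ + a / 2 * ((a + s) ^ 2)⁻¹) (s / (a + s) ^ 3) s := by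
    intro s hs
    rw [Set.uIcc_of_le hr] at hs
    have has : a + s ≠ 0 := by linarith [hs.1]
    have hlin : HasDerivAt (fun s : ℝ => a + s) 1 s := (hasDerivAt_id s).const_add a
    refine ((hlin.inv has).neg.add
      (((hlin.pow 2).inv (pow_ne_zero 2 has)).const_mul (a / 2))).congr_deriv ?_
    simp only [Pi.pow_apply]
    field_simp
    ring
  rw [integral_eq_sub_of_hasDerivAt hderiv (intervalIntegrable_div_add_pow_three ha hr)]
  have har : 0 < a + r := by linarith
  field_simp
  ring

theorem stmt16_general (h₁ k₁ h₂ k₂ hb₁ kb₁ hb₂ kb₂ : ℝ → ℝ → ℝ) (u r x y : ℝ)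
    (hu : 0 ≤ u) (hr : 0 ≤ r) (hx : 0 ≤ x) (hy : 0 ≤ y)
    (hc : Continuous (h₁ u) ∧ Continuous (k₁ u) ∧ Continuous (h₂ u) ∧ Continuous (k₂ u) ∧
      Continuous (hb₁ u) ∧ Continuous (kb₁ u) ∧ Continuous (hb₂ u) ∧ Continuous (kb₂ u))
    (hW₂ : ∀ s, 0 ≤ s → |h₂ u s| + |k₂ u s| ≤ x / (1 + u + s) ^ 2)
    (hWb₁ : ∀ s, 0 ≤ s → |hb₁ u s| + |kb₁ u s| ≤ x / ((1 + u) * (1 + u + s)))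
    (hdiff : ∀ s, 0 ≤ s → |h₁ u s - h₂ u s| + |k₁ u s - k₂ u s| ≤ y / (1 + u + s) ^ 2)
    (hdiffb : ∀ s, 0 ≤ s →
      |hb₁ u s - hb₂ u s| + |kb₁ u s - kb₂ u s| ≤ y / (1 + u + s) ^ 2) :
    |(∫ s in (0:ℝ)..r, s * (hb₁ u s * k₁ u s - kb₁ u s * h₁ u s)) -
        ∫ s in (0:ℝ)..r, s * (hb₂ u s * k₂ u s - kb₂ u s * h₂ u s)| ≤
      x * y * r ^ 2 / ((1 + u) ^ 2 * (1 + u + r) ^ 2) := by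
  obtain ⟨ch₁, ck₁, ch₂, ck₂, chb₁, ckb₁, chb₂, ckb₂⟩ := hc
  have ha : 0 < 1 + u := by linarith
  rw [← integral_sub ((continuous_mul_cross ch₁ ck₁ chb₁ ckb₁).intervalIntegrable 0 r)
    ((continuous_mul_cross ch₂ ck₂ chb₂ ckb₂).intervalIntegrable 0 r), ← Real.norm_eq_abs]
  calc _ ≤ ∫ s in (0:ℝ)..r, 2 * x * y / (1 + u) * (s / (1 + u + s) ^ 3) :=
        norm_integral_le_of_norm_le hr
          (MeasureTheory.ae_of_all _ fun s hs => abs_mul_cross_sub_mul_cross_le ha hs.1.le hx hy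
            (hWb₁ s hs.1.le) (hW₂ s hs.1.le) (hdiff s hs.1.le) (hdiffb s hs.1.le))
          ((intervalIntegrable_div_add_pow_three ha hr).const_mul _)
    _ = x * y * r ^ 2 / ((1 + u) ^ 2 * (1 + u + r) ^ 2) := by
        rw [integral_const_mul, integral_div_add_pow_three ha hr]
        field_simp

theorem stmt16 (h₁ k₁ h₂ k₂ hb₁ kb₁ hb₂ kb₂ : ℝ → ℝ → ℝ) (u r x y : ℝ)
    (hu : 0 ≤ u) (hr : 0 ≤ r) (hx : 0 ≤ x) (hy : 0 ≤ y)
    (hc : Continuous (h₁ u) ∧ Continuous (k₁ u) ∧ Continuous (h₂ u) ∧ Continuous (k₂ u) ∧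
      Continuous (hb₁ u) ∧ Continuous (kb₁ u) ∧ Continuous (hb₂ u) ∧ Continuous (kb₂ u))
    (hW₁ : ∀ s, 0 ≤ s → |h₁ u s| + |k₁ u s| ≤ x / (1 + u + s) ^ 2)
    (hW₂ : ∀ s, 0 ≤ s → |h₂ u s| + |k₂ u s| ≤ x / (1 + u + s) ^ 2)
    (hWb₁ : ∀ s, 0 ≤ s → |hb₁ u s| + |kb₁ u s| ≤ x / ((1 + u) * (1 + u + s)))
    (hWb₂ : ∀ s, 0 ≤ s → |hb₂ u s| + |kb₂ u s| ≤ x / ((1 + u) * (1 + u + s)))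
    (hdiff : ∀ s, 0 ≤ s → |h₁ u s - h₂ u s| + |k₁ u s - k₂ u s| ≤ y / (1 + u + s) ^ 2)
    (hdiffb : ∀ s, 0 ≤ s →
      |hb₁ u s - hb₂ u s| + |kb₁ u s - kb₂ u s| ≤ y / (1 + u + s) ^ 2) :
    |(∫ s in (0:ℝ)..r, s * (hb₁ u s * k₁ u s - kb₁ u s * h₁ u s)) -
        ∫ s in (0:ℝ)..r, s * (hb₂ u s * k₂ u s - kb₂ u s * h₂ u s)| ≤
      x * y * r ^ 2 / ((1 + u) ^ 2 * (1 + u + r) ^ 2) :=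
  stmt16_general h₁ k₁ h₂ k₂ hb₁ kb₁ hb₂ kb₂ u r x y hu hr hx hy hc hW₂ hWb₁ hdiff hdiffb
end
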